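/- arXiv:2504.16529 — 5 statements merged into one kernel-verified Lean document; each statement's English description precedes it below -/
import Mathlib

section
/- Let X and Y be independent nonnegative real-valued random variables on a probability space, with X exponentially distributed with rate a > 0 and Y exponentially distributed with rate b > 0, where a ≠ b. Then for all c1 > 0 and c2 > 0, setting B = c1 + c2, the strict inequality 1 − (b·e^{−a·B} − a·e^{−b·B})/(b − a) > (1 − e^{−a·c1})·(1 − e^{−b·c2}) holds; equivalently, P(X + Y ≤ B) > P(X ≤ c1 and Y ≤ c2 and X + Y ≤ B). -/
/-!
Let `F(t) = 1 - (b e^{-at} - a e^{-bt}) / (b - a)`, the distribution function of the sum of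
independent exponentials of rates `a ≠ b`. Memorylessness gives
`F(s + t) - (1 - e^{-as}) (1 - e^{-bt}) = e^{-as} F(t) + e^{-bt} F(s)`: the excess of the joint
budget is the mass of outcomes where one stage overruns its share and the other absorbs it.
Both terms are positive because `x ↦ (1 - e^{-x}) / x` is strictly decreasing (secant slopes of
the strictly convex `exp`). On the probabilistic side, the event `c1 < X ≤ c1 + c2/2`,
`0 < Y ≤ c2/2` has positive probability and lies in the joint event but not in the split one.
-/

open MeasureTheory ProbabilityTheory Real Set

theorem strictAntiOn_one_sub_exp_neg_div :
    StrictAntiOn (fun x : ℝ => (1 - exp (-x)) / x) (Ioi 0) := by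
  intro x (hx : 0 < x) y (hy : 0 < y) hxy
  have h := strictConvexOn_exp.secant_strict_mono (mem_univ 0) (mem_univ (-y)) (mem_univ (-x))
    (by linarith) (by linarith) (by linarith)
  simp only [exp_zero, sub_zero] at h
  rwa [← neg_div_neg_eq, neg_sub, neg_neg, ← neg_div_neg_eq (exp (-x) - 1), neg_sub, neg_neg] at h

noncomputable def hypoexpCDF (a b t : ℝ) : ℝ := 1 - (b * exp (-a * t) - a * exp (-b * t)) / (b - a)

theorem hypoexpCDF_comm (a b t : ℝ) : hypoexpCDF a b t = hypoexpCDF b a t := by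
  rw [hypoexpCDF, hypoexpCDF, ← neg_div_neg_eq, neg_sub, neg_sub]

theorem hypoexpCDF_pos {a b t : ℝ} (ha : 0 < a) (hb : 0 < b) (hab : a ≠ b) (ht : 0 < t) :
    0 < hypoexpCDF a b t := by
  wlog hlt : a < b generalizing a b
  · rw [hypoexpCDF_comm]
    exact this hb ha hab.symm (lt_of_le_of_ne (not_lt.1 hlt) hab.symm)
  have h := strictAntiOn_one_sub_exp_neg_div (mem_Ioi.2 (mul_pos ha ht))
    (mem_Ioi.2 (mul_pos hb ht)) (mul_lt_mul_of_pos_right hlt ht)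
  simp only [div_lt_div_iff₀ (mul_pos hb ht) (mul_pos ha ht), ← neg_mul] at h
  rw [hypoexpCDF, sub_pos, div_lt_one (sub_pos.2 hlt)]
  nlinarith

theorem hypoexpCDF_add_sub_mul {a b : ℝ} (hab : a ≠ b) (s t : ℝ) :
    hypoexpCDF a b (s + t) - (1 - exp (-a * s)) * (1 - exp (-b * t)) =
      exp (-a * s) * hypoexpCDF a b t + exp (-b * t) * hypoexpCDF a b s := by
  have hba : b - a ≠ 0 := sub_ne_zero.2 hab.symm
  simp only [hypoexpCDF, mul_add, exp_add]
  field_simp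
  ring

theorem expMeasure_Ioc_pos {r u v : ℝ} (hr : 0 < r) (hu : 0 ≤ u) (huv : u < v) :
    0 < expMeasure r (Ioc u v) := by
  have := isProbabilityMeasure_expMeasure hr
  rw [← measure_cdf (expMeasure r), StieltjesFunction.measure_Ioc, ENNReal.ofReal_pos, sub_pos,
    cdf_expMeasure_eq hr, cdf_expMeasure_eq hr, if_pos hu, if_pos (hu.trans huv.le)]
  gcongr

theorem ProbabilityTheory.IndepFun.measure_preimage_Ioc_inter_pos {Ω : Type*} [MeasurableSpace Ω]
    {μ : Measure Ω} {X Y : Ω → ℝ} (hX : Measurable X) (hY : Measurable Y) (hind : IndepFun X Y μ)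
    {a b : ℝ} (ha : 0 < a) (hb : 0 < b)
    (hXd : μ.map X = expMeasure a) (hYd : μ.map Y = expMeasure b)
    {u v u' v' : ℝ} (hu : 0 ≤ u) (huv : u < v) (hu' : 0 ≤ u') (huv' : u' < v') :
    0 < μ (X ⁻¹' Ioc u v ∩ Y ⁻¹' Ioc u' v') := by
  rw [hind.measure_inter_preimage_eq_mul _ _ measurableSet_Ioc measurableSet_Ioc,
    ← Measure.map_apply hX measurableSet_Ioc, ← Measure.map_apply hY measurableSet_Ioc, hXd, hYd]
  exact ENNReal.mul_pos (expMeasure_Ioc_pos ha hu huv).ne' (expMeasure_Ioc_pos hb hu' huv').ne'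

theorem joint_strictly_beats_disjoint_distinct_rates_general
    {Ω : Type*} [MeasureSpace Ω] [IsProbabilityMeasure (ℙ : Measure Ω)]
    (X Y : Ω → ℝ) (hX : Measurable X) (hY : Measurable Y)
    (hind : IndepFun X Y)
    (a b : ℝ) (ha : 0 < a) (hb : 0 < b) (hab : a ≠ b)
    (hXd : Measure.map X ℙ = expMeasure a)
    (hYd : Measure.map Y ℙ = expMeasure b)
    (c1 c2 B : ℝ) (hc1 : 0 < c1) (hc2 : 0 < c2) (hB : B = c1 + c2) :
    1 - (b * exp (-a * B) - a * exp (-b * B)) / (b - a)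
        > (1 - exp (-a * c1)) * (1 - exp (-b * c2))
    ∧ ℙ {ω | X ω + Y ω ≤ B}
        > ℙ {ω | X ω ≤ c1 ∧ Y ω ≤ c2 ∧ X ω + Y ω ≤ B} := by
  subst hB
  constructor
  · change _ < hypoexpCDF a b (c1 + c2)
    rw [← sub_pos, hypoexpCDF_add_sub_mul hab]
    have := hypoexpCDF_pos ha hb hab hc1
    have := hypoexpCDF_pos ha hb hab hc2
    positivity
  · set T := {ω | X ω + Y ω ≤ c1 + c2}
    set S := {ω | X ω ≤ c1 ∧ Y ω ≤ c2 ∧ X ω + Y ω ≤ c1 + c2}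
    have hST : S ⊆ T := fun ω hω => hω.2.2
    have hS : MeasurableSet S := by measurability
    have hwindow : X ⁻¹' Ioc c1 (c1 + c2 / 2) ∩ Y ⁻¹' Ioc 0 (c2 / 2) ⊆ T \ S := by
      rintro ω ⟨⟨hX1, hX2⟩, -, hY2⟩
      exact ⟨show X ω + Y ω ≤ c1 + c2 by linarith, fun h => hX1.not_ge h.1⟩
    have hpos : 0 < ℙ (T \ S) :=
      (hind.measure_preimage_Ioc_inter_pos hX hY ha hb hXd hYd hc1.le (by linarith) le_rfl
        (by linarith)).trans_le (measure_mono hwindow)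
    rwa [measure_sdiff hST hS.nullMeasurableSet (measure_ne_top _ _), tsub_pos_iff_lt] at hpos

/-- Joint latency management strictly outperforms any disjoint split of the
same budget (distinct exponential rates). -/
theorem joint_strictly_beats_disjoint_distinct_rates
    {Ω : Type*} [MeasureSpace Ω] [IsProbabilityMeasure (ℙ : Measure Ω)]
    (X Y : Ω → ℝ) (hX : Measurable X) (hY : Measurable Y)
    (hXnn : ∀ ω, 0 ≤ X ω) (hYnn : ∀ ω, 0 ≤ Y ω)
    (hind : IndepFun X Y)
    (a b : ℝ) (ha : 0 < a) (hb : 0 < b) (hab : a ≠ b)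
    (hXd : Measure.map X ℙ = expMeasure a)
    (hYd : Measure.map Y ℙ = expMeasure b)
    (c1 c2 B : ℝ) (hc1 : 0 < c1) (hc2 : 0 < c2) (hB : B = c1 + c2) :
    1 - (b * exp (-a * B) - a * exp (-b * B)) / (b - a)
        > (1 - exp (-a * c1)) * (1 - exp (-b * c2))
    ∧ ℙ {ω | X ω + Y ω ≤ B}
        > ℙ {ω | X ω ≤ c1 ∧ Y ω ≤ c2 ∧ X ω + Y ω ≤ B} :=
  joint_strictly_beats_disjoint_distinct_rates_general X Y hX hY hind a b ha hb hab hXd hYd c1 c2 B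
    hc1 hc2 hB
end

section
/- Let X and Y be independent nonnegative real-valued random variables on a probability space, both exponentially distributed with the same rate a > 0. Then for all c1 > 0 and c2 > 0, setting B = c1 + c2, the strict inequality 1 − e^{−a·B}·(1 + a·B) > (1 − e^{−a·c1})·(1 − e^{−a·c2}) holds. -/
/-!
With `u = e^{-a c₁}` and `v = e^{-a c₂}`, the difference of the two sides is
`u (1 - v (1 + a c₂)) + v (1 - u (1 + a c₁))`, and each bracket is positive because
`1 + t < eᵗ` for `t ≠ 0`.
-/

open MeasureTheory ProbabilityTheory Real

lemma exp_neg_mul_one_add_lt_one {x : ℝ} (hx : x ≠ 0) : exp (-x) * (1 + x) < 1 := by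
  rw [exp_neg, inv_mul_lt_iff₀ (exp_pos x), mul_one, add_comm]
  exact add_one_lt_exp hx

lemma one_sub_exp_neg_mul_one_sub_exp_neg_lt {x y : ℝ} (hx : x ≠ 0) (hy : y ≠ 0) :
    (1 - exp (-x)) * (1 - exp (-y)) < 1 - exp (-(x + y)) * (1 + (x + y)) := by
  have hdiff : 1 - exp (-(x + y)) * (1 + (x + y)) - (1 - exp (-x)) * (1 - exp (-y)) =
      exp (-x) * (1 - exp (-y) * (1 + y)) + exp (-y) * (1 - exp (-x) * (1 + x)) := by
    rw [neg_add, exp_add]; ring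
  have hpos : 0 < exp (-x) * (1 - exp (-y) * (1 + y)) + exp (-y) * (1 - exp (-x) * (1 + x)) :=
    add_pos (mul_pos (exp_pos _) (sub_pos.2 (exp_neg_mul_one_add_lt_one hy)))
      (mul_pos (exp_pos _) (sub_pos.2 (exp_neg_mul_one_add_lt_one hx)))
  linarith

theorem joint_strictly_beats_disjoint_equal_rates_general
    (a : ℝ) (ha : 0 < a)
    (c1 c2 B : ℝ) (hc1 : 0 < c1) (hc2 : 0 < c2) (hB : B = c1 + c2) :
    1 - exp (-a * B) * (1 + a * B)
      > (1 - exp (-a * c1)) * (1 - exp (-a * c2)) := by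
  have key := one_sub_exp_neg_mul_one_sub_exp_neg_lt (mul_pos ha hc1).ne' (mul_pos ha hc2).ne'
  rwa [hB, neg_mul, neg_mul, neg_mul, mul_add a c1 c2]

/-- Joint latency management strictly outperforms any disjoint split of the
same budget (equal exponential rates). -/
theorem joint_strictly_beats_disjoint_equal_rates
    {Ω : Type*} [MeasureSpace Ω] [IsProbabilityMeasure (ℙ : Measure Ω)]
    (X Y : Ω → ℝ) (hX : Measurable X) (hY : Measurable Y)
    (hXnn : ∀ ω, 0 ≤ X ω) (hYnn : ∀ ω, 0 ≤ Y ω)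
    (hind : IndepFun X Y)
    (a : ℝ) (ha : 0 < a)
    (hXd : Measure.map X ℙ = expMeasure a)
    (hYd : Measure.map Y ℙ = expMeasure a)
    (c1 c2 B : ℝ) (hc1 : 0 < c1) (hc2 : 0 < c2) (hB : B = c1 + c2) :
    1 - exp (-a * B) * (1 + a * B)
      > (1 - exp (-a * c1)) * (1 - exp (-a * c2)) :=
  joint_strictly_beats_disjoint_equal_rates_general a ha c1 c2 B hc1 hc2 hB
end

section
/- Fix c > 0 and 0 < μ1 < μ2, and define g : [0, μ1) → ℝ by g(λ) = 1 − ((μ2 − λ)·e^{−(μ1 − λ)·c} − (μ1 − λ)·e^{−(μ2 − λ)·c})/(μ2 − μ1). Then g is strictly antitone on [0, μ1): for all 0 ≤ λ1 < λ2 < μ1, g(λ2) < g(λ1). -/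
/-!
With `a = (μ1 - λ) c < b = (μ2 - λ) c`, the derivative of the numerator of `g` is
`e^{-a} (b - 1) - e^{-b} (a - 1)`, which is positive because `x ↦ e^x (x - 1)` has derivative
`x e^x` and is therefore strictly increasing on `[0, ∞)`.
-/

open Real Set

lemma strictMonoOn_exp_mul_sub_one : StrictMonoOn (fun x : ℝ => exp x * (x - 1)) (Ici 0) := by
  apply strictMonoOn_of_deriv_pos (convex_Ici 0) (by fun_prop)
  intro x hx
  rw [interior_Ici] at hx
  have hd : HasDerivAt (fun x : ℝ => exp x * (x - 1)) (exp x * (x - 1) + exp x * 1) x :=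
    (hasDerivAt_exp x).mul ((hasDerivAt_id x).sub_const 1)
  rw [hd.deriv]
  nlinarith [mul_pos (exp_pos x) (mem_Ioi.mp hx)]

lemma exp_neg_mul_sub_one_lt {a b : ℝ} (ha : 0 ≤ a) (hab : a < b) :
    exp (-b) * (a - 1) < exp (-a) * (b - 1) :=
  calc exp (-b) * (a - 1) = exp (-a - b) * (exp a * (a - 1)) := by
        rw [← mul_assoc, ← exp_add]; ring_nf
    _ < exp (-a - b) * (exp b * (b - 1)) :=
        mul_lt_mul_of_pos_left (strictMonoOn_exp_mul_sub_one ha (ha.trans hab.le) hab)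
          (exp_pos _)
    _ = exp (-a) * (b - 1) := by
        rw [← mul_assoc, ← exp_add]; ring_nf

lemma hasDerivAt_sub_mul_exp (p q c x : ℝ) :
    HasDerivAt (fun l => (p - l) * exp (-(q - l) * c))
      (exp (-((q - x) * c)) * ((p - x) * c - 1)) x := by
  have hlin : HasDerivAt (fun l => -(q - l) * c) c x := by
    simpa using (((hasDerivAt_id x).const_sub q).neg).mul_const c
  refine (((hasDerivAt_id x).const_sub p).fun_mul hlin.exp).congr_deriv ?_
  simp only [id, neg_mul]
  ring

noncomputable def jointSatisfaction (c μ1 μ2 l : ℝ) : ℝ :=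
  1 - ((μ2 - l) * exp (-(μ1 - l) * c) - (μ1 - l) * exp (-(μ2 - l) * c)) / (μ2 - μ1)

lemma strictAntiOn_jointSatisfaction {c μ1 μ2 : ℝ} (hc : 0 < c) (hμ12 : μ1 < μ2) :
    StrictAntiOn (jointSatisfaction c μ1 μ2) (Iic μ1) := by
  apply strictAntiOn_of_deriv_neg (convex_Iic μ1)
  · unfold jointSatisfaction; fun_prop
  intro x hx
  rw [interior_Iic] at hx
  have hderiv : HasDerivAt (jointSatisfaction c μ1 μ2) _ x :=
    (((hasDerivAt_sub_mul_exp μ2 μ1 c x).fun_sub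
      (hasDerivAt_sub_mul_exp μ1 μ2 c x)).div_const (μ2 - μ1)).const_sub 1
  rw [hderiv.deriv, neg_lt_zero]
  have ha : 0 ≤ (μ1 - x) * c := mul_nonneg (sub_nonneg.2 hx.le) hc.le
  have hab : (μ1 - x) * c < (μ2 - x) * c := by gcongr
  exact div_pos (sub_pos.2 (exp_neg_mul_sub_one_lt ha hab)) (sub_pos.2 hμ12)

theorem joint_satisfaction_strictAntiOn_general
    (c μ1 μ2 : ℝ) (hc : 0 < c) (hμ12 : μ1 < μ2)
    (g : ℝ → ℝ)
    (hg : ∀ l, g l = 1 - ((μ2 - l) * exp (-(μ1 - l) * c)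
        - (μ1 - l) * exp (-(μ2 - l) * c)) / (μ2 - μ1)) :
    StrictAntiOn g (Set.Ico 0 μ1) := by
  obtain rfl : g = jointSatisfaction c μ1 μ2 := funext hg
  exact (strictAntiOn_jointSatisfaction hc hμ12).mono
    (Ico_subset_Iio_self.trans Iio_subset_Iic_self)

/-- The closed-form joint job satisfaction rate is strictly antitone in the
arrival rate `λ` on `[0, μ1)`. -/
theorem joint_satisfaction_strictAntiOn
    (c μ1 μ2 : ℝ) (hc : 0 < c) (hμ1 : 0 < μ1) (hμ12 : μ1 < μ2)
    (g : ℝ → ℝ)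
    (hg : ∀ l, g l = 1 - ((μ2 - l) * exp (-(μ1 - l) * c)
        - (μ1 - l) * exp (-(μ2 - l) * c)) / (μ2 - μ1)) :
    StrictAntiOn g (Set.Ico 0 μ1) :=
  joint_satisfaction_strictAntiOn_general c μ1 μ2 hc hμ12 g hg
end

section
/- Fix c > 0, 0 < μ1 < μ2, and a threshold α with 0 < α ≤ 1, and define g : [0, μ1) → ℝ by g(λ) = 1 − ((μ2 − λ)·e^{−(μ1 − λ)·c} − (μ1 − λ)·e^{−(μ2 − λ)·c})/(μ2 − μ1). Then the set S = {λ ∈ [0, μ1) : g(λ) ≥ α} is bounded above by some λ̄ < μ1; in particular, if S is nonempty, its supremum (the service capacity λ*) is strictly less than the bottleneck service rate μ1. -/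
open Real

/-- The set of arrival rates meeting the target satisfaction threshold `α` is
bounded away from the bottleneck rate `μ1`; in particular the service
capacity is strictly below `μ1`. -/
theorem service_capacity_lt_bottleneck
    (c μ1 μ2 α : ℝ) (hc : 0 < c) (hμ1 : 0 < μ1) (hμ12 : μ1 < μ2)
    (hα0 : 0 < α) (hα1 : α ≤ 1)
    (g : ℝ → ℝ)
    (hg : ∀ l, g l = 1 - ((μ2 - l) * exp (-(μ1 - l) * c)
        - (μ1 - l) * exp (-(μ2 - l) * c)) / (μ2 - μ1)) :
    (∃ lbar, lbar < μ1 ∧ ∀ l ∈ {l ∈ Set.Ico 0 μ1 | α ≤ g l}, l ≤ lbar)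
    ∧ ({l ∈ Set.Ico 0 μ1 | α ≤ g l}.Nonempty →
        sSup {l ∈ Set.Ico 0 μ1 | α ≤ g l} < μ1) := by
  have hlbar_lt : μ1 - α / c < μ1 := by
    have : 0 < α / c := div_pos hα0 hc
    linarith
  have key : ∀ l ∈ {l ∈ Set.Ico 0 μ1 | α ≤ g l}, l ≤ μ1 - α / c := by
    rintro l ⟨⟨hl0, hl1⟩, hgl⟩
    have hd : 0 < μ2 - μ1 := by linarith
    have ha : 0 < μ1 - l := by linarith
    have hbound : g l ≤ (μ1 - l) * c := by
      rw [hg]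
      have h1 : exp (-(μ2 - l) * c) ≤ exp (-(μ1 - l) * c) := by
        apply exp_le_exp.mpr; nlinarith
      have e1 : exp (-(μ1 - l) * c)
          ≤ ((μ2 - l) * exp (-(μ1 - l) * c)
            - (μ1 - l) * exp (-(μ2 - l) * c)) / (μ2 - μ1) := by
        rw [le_div_iff₀ hd]
        nlinarith [mul_nonneg ha.le (sub_nonneg.mpr h1)]
      have e2 : 1 - exp (-(μ1 - l) * c) ≤ (μ1 - l) * c := by
        have := add_one_le_exp (-(μ1 - l) * c)
        nlinarith
      linarith
    have hαl : α ≤ (μ1 - l) * c := le_trans hgl hbound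
    have := (div_le_iff₀ hc).mpr hαl
    linarith
  refine ⟨⟨μ1 - α / c, hlbar_lt, key⟩, fun hne => ?_⟩
  have := csSup_le hne key
  linarith
end

section
/- Fix 0 < μ1 < μ2, budgets c1 > 0 and c2 > 0, set B = c1 + c2, and define on [0, μ1) the functions g_joint(λ) = 1 − ((μ2 − λ)·e^{−(μ1 − λ)·B} − (μ1 − λ)·e^{−(μ2 − λ)·B})/(μ2 − μ1) and g_disj(λ) = (1 − e^{−(μ1 − λ)·c1})·(1 − e^{−(μ2 − λ)·c2}). Then g_disj(λ) < g_joint(λ) for every λ ∈ [0, μ1), and consequently, for any threshold α ∈ (0, 1], the set {λ ∈ [0, μ1) : g_disj(λ) ≥ α} is contained in {λ ∈ [0, μ1) : g_joint(λ) ≥ α}. -/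
open Real

private lemma key_exp_ineq (a b c : ℝ) (ha : 0 < a) (hab : a < b) (hc : 0 < c) :
    b * exp (-a * c) - a * exp (-b * c) < b - a := by
  set f : ℝ → ℝ := fun x => b * (1 - exp (-a * x)) - a * (1 - exp (-b * x)) with hf
  have hmono : StrictMonoOn f (Set.Ici (0 : ℝ)) := by
    apply strictMonoOn_of_deriv_pos (convex_Ici 0)
    · fun_prop
    · intro x hx
      rw [interior_Ici] at hx
      have h1 : HasDerivAt (fun x => exp (-a * x)) (-a * exp (-a * x)) x := by
        simpa [mul_comm] using ((hasDerivAt_id x).const_mul (-a)).exp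
      have h2 : HasDerivAt (fun x => exp (-b * x)) (-b * exp (-b * x)) x := by
        simpa [mul_comm] using ((hasDerivAt_id x).const_mul (-b)).exp
      have hfd : HasDerivAt f
          (b * (0 - (-a * exp (-a * x))) - a * (0 - (-b * exp (-b * x)))) x := by
        exact (((hasDerivAt_const x (1:ℝ)).sub h1).const_mul b).sub
          (((hasDerivAt_const x (1:ℝ)).sub h2).const_mul a)
      rw [hfd.deriv]
      have hx' : 0 < x := Set.mem_Ioi.mp hx
      have hexp : exp (-b * x) < exp (-a * x) := by
        apply Real.exp_lt_exp.mpr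
        nlinarith
      nlinarith [mul_pos (mul_pos ha (ha.trans hab)) (sub_pos.mpr hexp)]
  have h0 : f 0 = 0 := by simp [hf]
  have := hmono (Set.self_mem_Ici) (Set.mem_Ici.mpr hc.le) hc
  rw [h0] at this
  simp only [hf] at this
  nlinarith

/-- The closed-form joint satisfaction rate strictly dominates the disjoint
one at every arrival rate in `[0, μ1)`, hence the threshold set of the
disjoint scheme is contained in that of the joint scheme for every target
probability `α ∈ (0, 1]`. -/
theorem joint_dominates_disjoint_threshold_sets
    (μ1 μ2 c1 c2 B : ℝ) (hμ1 : 0 < μ1) (hμ12 : μ1 < μ2)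
    (hc1 : 0 < c1) (hc2 : 0 < c2) (hB : B = c1 + c2)
    (gJoint gDisj : ℝ → ℝ)
    (hgJ : ∀ l, gJoint l = 1 - ((μ2 - l) * exp (-(μ1 - l) * B)
        - (μ1 - l) * exp (-(μ2 - l) * B)) / (μ2 - μ1))
    (hgD : ∀ l, gDisj l
        = (1 - exp (-(μ1 - l) * c1)) * (1 - exp (-(μ2 - l) * c2))) :
    (∀ l ∈ Set.Ico 0 μ1, gDisj l < gJoint l)
    ∧ ∀ α : ℝ, 0 < α → α ≤ 1 →
        {l ∈ Set.Ico 0 μ1 | α ≤ gDisj l} ⊆ {l ∈ Set.Ico 0 μ1 | α ≤ gJoint l} := by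
  have main : ∀ l ∈ Set.Ico 0 μ1, gDisj l < gJoint l := by
    intro l hl
    obtain ⟨hl0, hlμ1⟩ := hl
    set a := μ1 - l with ha'
    set b := μ2 - l with hb'
    have ha : 0 < a := by simp [ha']; linarith
    have hab : a < b := by simp [ha', hb']; linarith
    have hD : 0 < b - a := by linarith
    set u := exp (-a * c1) with hu'
    set v := exp (-a * c2) with hv'
    set w := exp (-b * c1) with hw'
    set z := exp (-b * c2) with hz'
    have hu1 : u < 1 := by rw [hu']; apply exp_lt_one_iff.mpr; nlinarith
    have hz1 : z < 1 := by rw [hz']; apply exp_lt_one_iff.mpr; nlinarith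
    have hu0 : 0 < u := exp_pos _
    have hz0 : 0 < z := exp_pos _
    have K1 : b * u - a * w < b - a := key_exp_ineq a b c1 ha hab hc1
    have K2 : b * v - a * z < b - a := key_exp_ineq a b c2 ha hab hc2
    have huv : exp (-a * B) = u * v := by
      rw [hu', hv', ← Real.exp_add, hB]; ring_nf
    have hwz : exp (-b * B) = w * z := by
      rw [hw', hz', ← Real.exp_add, hB]; ring_nf
    rw [hgJ, hgD, huv, hwz]
    rw [ha'.symm, hb'.symm, show μ2 - μ1 = b - a by rw [ha', hb']; ring, ← hu', ← hz']
    have goal : b * (u * v) - a * (w * z) < (b - a) * (u + z - u * z) := by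
      nlinarith [mul_lt_mul_of_pos_left K2 hu0, mul_lt_mul_of_pos_left K1 hz0]
    have hq : (b * (u * v) - a * (w * z)) / (b - a) < u + z - u * z :=
      (div_lt_iff₀ hD).mpr (by linarith [goal])
    nlinarith [hq]
  refine ⟨main, ?_⟩
  intro α hα0 hα1 l hl
  obtain ⟨hmem, hle⟩ := hl
  exact ⟨hmem, le_of_lt (lt_of_le_of_lt hle (main l hmem))⟩
end
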